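/- arXiv:2603.01551 — 2 statements merged into one kernel-verified Lean document; each statement's English description precedes it below -/
import Mathlib

section
/- Define F_L : ℝ → Matrix (Fin 2) (Fin 2) ℝ by F_L(α) := (cosh(2α))^(−1/2) • ![![1, sinh(2α)], ![0, cosh(2α)]]. Then F_L is differentiable (entrywise) and for every α ∈ ℝ, the velocity gradient ℓ(α) := F_L'(α)·F_L(α)⁻¹ satisfies ℓ(α) = ![![−tanh(2α), 2], ![0, tanh(2α)]]. Consequently its symmetric part d(α) := (1/2)(ℓ(α) + ℓ(α)ᵀ) equals ![![−tanh(2α), 1], ![1, tanh(2α)]] and its skew-symmetric part w(α) := (1/2)(ℓ(α) − ℓ(α)ᵀ) equals ![![0, 1], ![−1, 0]]. -/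
/-!
Write `F_L = φ • G` with `φ α = (cosh 2α)^(-1/2)` and `G = lfssShape`.
By the product rule the scalar factor contributes `(φ'/φ) • 1 = -tanh 2α • 1` to `Ḟ F⁻¹`,
and `Ġ = !![0, 2; 0, 2 tanh 2α] * G`, so `Ġ G⁻¹ = !![0, 2; 0, 2 tanh 2α]`.
Adding the two gives `ℓ`; `d` and `w` are then read off entrywise.
-/

open Matrix Real

/-- Entrywise derivative of a matrix-valued function of a real variable. -/
noncomputable def matDeriv (A : ℝ → Matrix (Fin 2) (Fin 2) ℝ) (t : ℝ) :
    Matrix (Fin 2) (Fin 2) ℝ :=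
  Matrix.of fun i j => deriv (fun s => A s i j) t

theorem matDeriv_smul {φ : ℝ → ℝ} {A : ℝ → Matrix (Fin 2) (Fin 2) ℝ} {t : ℝ}
    (hφ : DifferentiableAt ℝ φ t) (hA : ∀ i j, DifferentiableAt ℝ (fun s => A s i j) t) :
    matDeriv (fun s => φ s • A s) t = deriv φ t • A t + φ t • matDeriv A t := by
  ext i j
  exact deriv_fun_mul hφ (hA i j)

theorem matDeriv_smul_mul_inv {φ : ℝ → ℝ} {A : ℝ → Matrix (Fin 2) (Fin 2) ℝ}
    {N : Matrix (Fin 2) (Fin 2) ℝ} {c t : ℝ}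
    (hφ : HasDerivAt φ (c * φ t) t) (hA : ∀ i j, DifferentiableAt ℝ (fun s => A s i j) t)
    (hN : matDeriv A t = N * A t) (hφ0 : φ t ≠ 0) (hdet : IsUnit (A t).det) :
    matDeriv (fun s => φ s • A s) t * (φ t • A t)⁻¹ = c • 1 + N := by
  have hdet' : IsUnit (φ t • A t).det := by
    rw [det_smul]
    exact (isUnit_iff_ne_zero.mpr (pow_ne_zero _ hφ0)).mul hdet
  have hprod : matDeriv (fun s => φ s • A s) t = (c • 1 + N) * (φ t • A t) := by
    rw [matDeriv_smul hφ.differentiableAt hA, hφ.deriv, hN, add_mul, smul_mul_smul_comm,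
      one_mul, Matrix.mul_smul, mul_smul]
  rw [hprod, mul_nonsing_inv_cancel_right _ _ hdet']

theorem HasDerivAt.sqrt_inv {f : ℝ → ℝ} {f' x : ℝ} (hf : HasDerivAt f f' x) (hx : 0 < f x) :
    HasDerivAt (fun t => (√(f t))⁻¹) (-(f' / (2 * f x)) * (√(f x))⁻¹) x := by
  refine ((hf.sqrt hx.ne').inv (Real.sqrt_pos.mpr hx).ne').congr_deriv ?_
  rw [Real.sq_sqrt hx.le]
  field_simp

theorem hasDerivAt_sqrt_cosh_two_mul_inv (α : ℝ) :
    HasDerivAt (fun t => (√(cosh (2 * t)))⁻¹) (-tanh (2 * α) * (√(cosh (2 * α)))⁻¹) α := by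
  have h := ((hasDerivAt_id' α).const_mul 2).cosh.sqrt_inv (cosh_pos _)
  convert h using 2
  rw [tanh_eq_sinh_div_cosh]
  ring

noncomputable def lfssShape (α : ℝ) : Matrix (Fin 2) (Fin 2) ℝ :=
  !![1, sinh (2 * α); 0, cosh (2 * α)]

theorem differentiableAt_lfssShape_apply (α : ℝ) (i j : Fin 2) :
    DifferentiableAt ℝ (fun s => lfssShape s i j) α := by
  fin_cases i <;> fin_cases j <;> simp [lfssShape] <;> fun_prop

theorem matDeriv_lfssShape (α : ℝ) :
    matDeriv lfssShape α = !![0, 2; 0, 2 * tanh (2 * α)] * lfssShape α := by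
  have hsinh := ((hasDerivAt_id' α).const_mul 2).sinh
  have hcosh := ((hasDerivAt_id' α).const_mul 2).cosh
  ext i j
  fin_cases i <;> fin_cases j
  · simp [matDeriv, lfssShape]
  · simp [matDeriv, lfssShape, hsinh.deriv]
    ring
  · simp [matDeriv, lfssShape]
  · simp [matDeriv, lfssShape, hcosh.deriv, tanh_eq_sinh_div_cosh]
    field_simp [(cosh_pos (2 * α)).ne']

theorem det_lfssShape (α : ℝ) : (lfssShape α).det = cosh (2 * α) := by
  simp [lfssShape, det_fin_two_of]

/-- Eqs. (4-38) and (4-40): the velocity gradient of LFSS deformation is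
`ℓ = !![−tanh 2α, 2; 0, tanh 2α]`, with stretching `d = !![−tanh 2α, 1; 1, tanh 2α]`
and vorticity `w = !![0, 1; −1, 0]`. -/
theorem lfss_velocity_gradient :
    let F_L : ℝ → Matrix (Fin 2) (Fin 2) ℝ := fun α =>
      (Real.sqrt (Real.cosh (2*α)))⁻¹ • !![1, Real.sinh (2*α); 0, Real.cosh (2*α)]
    (∀ α : ℝ, ∀ i j, DifferentiableAt ℝ (fun s => F_L s i j) α) ∧
    (∀ α : ℝ,
      let ℓ : Matrix (Fin 2) (Fin 2) ℝ := matDeriv F_L α * (F_L α)⁻¹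
      ℓ = !![-Real.tanh (2*α), 2; 0, Real.tanh (2*α)] ∧
      (1/2 : ℝ) • (ℓ + ℓᵀ) = !![-Real.tanh (2*α), 1; 1, Real.tanh (2*α)] ∧
      (1/2 : ℝ) • (ℓ - ℓᵀ) = !![0, 1; -1, 0]) := by
  intro F_L
  refine ⟨fun α i j => (hasDerivAt_sqrt_cosh_two_mul_inv α).differentiableAt.mul
    (differentiableAt_lfssShape_apply α i j), fun α => ?_⟩
  intro ℓ
  have hℓ : ℓ = !![-tanh (2 * α), 2; 0, tanh (2 * α)] := by
    have hdet : IsUnit (lfssShape α).det := by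
      rw [det_lfssShape]
      exact (cosh_pos _).ne'.isUnit
    refine (matDeriv_smul_mul_inv (hasDerivAt_sqrt_cosh_two_mul_inv α)
      (differentiableAt_lfssShape_apply α) (matDeriv_lfssShape α) (by positivity) hdet).trans ?_
    ext i j
    fin_cases i <;> fin_cases j <;> simp [two_mul]
  refine ⟨hℓ, ?_, ?_⟩ <;> rw [hℓ] <;> ext i j <;> fin_cases i <;> fin_cases j <;> simp <;> ring
end

section
/- Let μ ∈ ℝ. Define U : ℝ → Matrix (Fin 2) (Fin 2) ℝ by U(α) := ![![cosh α, sinh α], ![sinh α, cosh α]], K := ![![0, 1], ![1, 0]], P₁ := (1/2) • ![![1, 1], ![1, 1]], P₂ := (1/2) • ![![1, −1], ![−1, 1]]. Then: (i) U is differentiable and the Lagrangian stretching D̂(α) := (1/2)(U'(α)·U(α)⁻¹ + U(α)⁻¹·U'(α)) equals K for every α; (ii) P₁·K·P₂ = 0 and P₂·K·P₁ = 0, so for every function r : ℝ → ℝ the Lagrangian spin Ω(α) := r(α) • (P₁·D̂(α)·P₂ − P₂·D̂(α)·P₁) is the zero matrix; and (iii) the function σ̄(α) := (2·μ·α) • K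 satisfies σ̄(0) = 0 and σ̄'(α) + σ̄(α)·Ω(α) − Ω(α)·σ̄(α) = (2μ) • D̂(α) for every α. Hence every Hooke-like isotropic hypoelastic model based on such a corotational stress rate yields, under RFSS deformation with zero initial stress, the Lagrangian pure shear stress σ̄(α) = 2μα·K. -/
open Matrix Real

/-- Eqs. (4-73)–(4-79): under RFSS deformation the Lagrangian stretching is
`D̂ = K`, every material spin `Ω = r·(P₁ D̂ P₂ − P₂ D̂ P₁)` vanishes, and the
Lagrangian pure shear stress `σ̄(α) = 2μα·K` solves every Hooke-like corotational
hypoelastic model with zero initial stress. -/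
theorem rfss_hypoelastic_lagrangian_pure_shear (μ : ℝ) :
    let U : ℝ → Matrix (Fin 2) (Fin 2) ℝ := fun α =>
      !![Real.cosh α, Real.sinh α; Real.sinh α, Real.cosh α]
    let K : Matrix (Fin 2) (Fin 2) ℝ := !![0, 1; 1, 0]
    let P₁ : Matrix (Fin 2) (Fin 2) ℝ := (1/2 : ℝ) • !![1, 1; 1, 1]
    let P₂ : Matrix (Fin 2) (Fin 2) ℝ := (1/2 : ℝ) • !![1, -1; -1, 1]
    let Dhat : ℝ → Matrix (Fin 2) (Fin 2) ℝ := fun α =>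
      (1/2 : ℝ) • (matDeriv U α * (U α)⁻¹ + (U α)⁻¹ * matDeriv U α)
    (∀ α : ℝ, ∀ i j, DifferentiableAt ℝ (fun s => U s i j) α) ∧
    (∀ α : ℝ, Dhat α = K) ∧
    (P₁ * K * P₂ = 0 ∧ P₂ * K * P₁ = 0) ∧
    (∀ r : ℝ → ℝ, ∀ α : ℝ,
      r α • (P₁ * Dhat α * P₂ - P₂ * Dhat α * P₁) = 0) ∧
    (let σbar : ℝ → Matrix (Fin 2) (Fin 2) ℝ := fun α => (2*μ*α) • K
     σbar 0 = 0 ∧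
     ∀ r : ℝ → ℝ, ∀ α : ℝ,
       let Ω : Matrix (Fin 2) (Fin 2) ℝ :=
         r α • (P₁ * Dhat α * P₂ - P₂ * Dhat α * P₁)
       matDeriv σbar α + σbar α * Ω - Ω * σbar α = (2*μ) • Dhat α) := by
  intro U K P₁ P₂ Dhat
  have hUd : ∀ α : ℝ, matDeriv U α =
      !![Real.sinh α, Real.cosh α; Real.cosh α, Real.sinh α] := by
    intro α
    ext i j
    fin_cases i <;> fin_cases j <;>
      simp [matDeriv, U, Real.deriv_cosh, Real.deriv_sinh]
  have hUinv : ∀ α : ℝ, (U α)⁻¹ =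
      !![Real.cosh α, -Real.sinh α; -Real.sinh α, Real.cosh α] := by
    intro α
    apply Matrix.inv_eq_right_inv
    ext i j
    fin_cases i <;> fin_cases j <;>
      simp [U, Matrix.mul_apply, Fin.sum_univ_two] <;>
      nlinarith [Real.cosh_sq_sub_sinh_sq α]
  have hD : ∀ α : ℝ, Dhat α = K := by
    intro α
    show (1/2 : ℝ) • (matDeriv U α * (U α)⁻¹ + (U α)⁻¹ * matDeriv U α) = K
    rw [hUd, hUinv]
    ext i j
    fin_cases i <;> fin_cases j <;>
      simp [K, Matrix.mul_apply, Fin.sum_univ_two] <;>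
      nlinarith [Real.cosh_sq_sub_sinh_sq α]
  have hP12 : P₁ * K * P₂ = 0 ∧ P₂ * K * P₁ = 0 := by
    constructor <;>
    · ext i j
      fin_cases i <;> fin_cases j <;>
        simp [P₁, P₂, K, Matrix.mul_apply, Fin.sum_univ_two] <;> ring
  have hΩ : ∀ r : ℝ → ℝ, ∀ α : ℝ,
      r α • (P₁ * Dhat α * P₂ - P₂ * Dhat α * P₁) = 0 := by
    intro r α
    rw [hD, hP12.1, hP12.2]
    simp
  refine ⟨?_, hD, hP12, hΩ, ?_, ?_⟩
  · intro α i j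
    fin_cases i <;> fin_cases j <;>
      simp [U] <;>
      first
        | exact (Real.differentiable_cosh).differentiableAt
        | exact (Real.differentiable_sinh).differentiableAt
  · show (2*μ*(0:ℝ)) • K = 0
    simp
  · intro r α Ω
    have hΩ0 : Ω = 0 := hΩ r α
    rw [hΩ0, hD]
    have hσd : matDeriv (fun α => (2*μ*α) • K) α = (2*μ) • K := by
      ext i j
      simp only [matDeriv, Matrix.of_apply, Matrix.smul_apply, smul_eq_mul]
      have : (fun s => 2*μ*s * K i j) = fun s => (2*μ* K i j) * s := by
        funext s; ring
      rw [this, deriv_const_mul_field]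
      simp [mul_comm, mul_assoc, mul_left_comm]
    rw [hσd]
    simp
end
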